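/- arXiv:2502.09965 — 2 statements merged into one kernel-verified Lean document; each statement's English description precedes it below -/
import Mathlib

section
/- Let ω > 0 and let v : ℝ → ℝ be C² and ω-periodic, let μ̄ : ℝ → ℝ be continuous with μ̄(v(x)) > 0 for all x, and let m be a nonzero real constant. If the ω-periodic function F(x) := m²v(x)²/2 + Φ(x) - v(x)·μ̄(v(x))·v'(x) - R(x) (for some C¹ ω-periodic functions Φ, R) satisfies F'(x) + m·μ̄(v(x))·|v'(x)|² = 0 for all x, then v' ≡ 0, i.e. v is constant. -/
theorem stmt_0 (ω : ℝ) (hω : 0 < ω) (v μbar Φ R : ℝ → ℝ) (m : ℝ) (hm : m ≠ 0)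
    (hv : ContDiff ℝ 2 v) (hvper : Function.Periodic v ω)
    (hμcont : Continuous μbar) (hμpos : ∀ x, 0 < μbar (v x))
    (hΦ : ContDiff ℝ 1 Φ) (hΦper : Function.Periodic Φ ω)
    (hR : ContDiff ℝ 1 R) (hRper : Function.Periodic R ω)
    (F : ℝ → ℝ)
    (hF : F = fun x => m ^ 2 * v x ^ 2 / 2 + Φ x - v x * μbar (v x) * deriv v x - R x)
    (heq : ∀ x, deriv F x + m * μbar (v x) * |deriv v x| ^ 2 = 0) :
    ∀ x, deriv v x = 0 := by
  -- basic differentiability facts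
  have hv1 : ContDiff ℝ 1 v := hv.of_le (by norm_num)
  have hvd : Differentiable ℝ v := hv1.differentiable (by norm_num)
  have hdv : ContDiff ℝ 1 (deriv v) := ((contDiff_succ_iff_deriv.mp (show ContDiff ℝ (1+1) v by norm_num; exact hv)).2.2)
  have hdvd : Differentiable ℝ (deriv v) := hdv.differentiable (by norm_num)
  have hdvc : Continuous (deriv v) := hdvd.continuous
  have hvc : Continuous v := hvd.continuous
  -- H is the C¹ part of F
  set H : ℝ → ℝ := fun x => m ^ 2 * v x ^ 2 / 2 + Φ x - R x with hH
  have hHd : Differentiable ℝ H := by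
    have h1 := hΦ.differentiable (by norm_num)
    have h2 := hR.differentiable (by norm_num)
    simp only [hH]
    fun_prop
  -- K is the possibly non-smooth part
  set K : ℝ → ℝ := fun x => v x * μbar (v x) * deriv v x with hK
  have hFHK : F = fun x => H x - K x := by
    funext x; simp [hF, hH, hK]; ring
  -- continuity of the "dissipation" density
  set h : ℝ → ℝ := fun x => μbar (v x) * |deriv v x| ^ 2 with hh
  have hhc : Continuous h := ((hμcont.comp hvc).mul ((hdvc.abs).pow 2))
  have hhnn : ∀ x, 0 ≤ h x := fun x =>
    mul_nonneg (hμpos x).le (by positivity)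
  -- F is differentiable everywhere, and hence HasDerivAt F (-(m * h x)) x.
  have hFdiff : ∀ x, HasDerivAt F (-(m * h x)) x := by
    intro x
    have hdF : DifferentiableAt ℝ F x := by
      by_cases hzero : deriv v x = 0
      · -- K is differentiable at x via the slope argument
        have hKd : HasDerivAt K (v x * μbar (v x) * deriv (deriv v) x) x := by
          rw [hasDerivAt_iff_tendsto_slope]
          have hvslope : Filter.Tendsto (slope (deriv v) x) (nhdsWithin x {x}ᶜ)
              (nhds (deriv (deriv v) x)) :=
            hasDerivAt_iff_tendsto_slope.mp (hdvd x).hasDerivAt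
          have hcont : Filter.Tendsto (fun y => v y * μbar (v y)) (nhdsWithin x {x}ᶜ)
              (nhds (v x * μbar (v x))) :=
            ((hvc.mul (hμcont.comp hvc)).continuousAt).continuousWithinAt
          have := hcont.mul hvslope
          refine this.congr' ?_
          filter_upwards [self_mem_nhdsWithin] with y hy
          have hyx : y ≠ x := hy
          simp only [slope_def_field, hK]
          rw [hzero]
          ring
        exact hFHK ▸ (hHd x).sub hKd.differentiableAt
      · -- otherwise F must be differentiable, else deriv F x = 0 contradicts heq
        by_contra hnd
        have : deriv F x = 0 := deriv_zero_of_not_differentiableAt hnd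
        have h1 := heq x
        rw [this, zero_add] at h1
        have h2 : μbar (v x) * |deriv v x| ^ 2 > 0 := by
          have := hμpos x
          have habs : |deriv v x| > 0 := abs_pos.mpr hzero
          positivity
        exact (mul_ne_zero (mul_ne_zero hm (hμpos x).ne')
          (pow_ne_zero 2 (abs_ne_zero.mpr hzero))) (by linarith [h1])
    have : deriv F x = -(m * h x) := by
      have := heq x
      simp only [hh]
      linarith
    exact this ▸ hdF.hasDerivAt
  -- F is periodic
  have hdvper : Function.Periodic (deriv v) ω := by
    intro x
    have h1 : HasDerivAt (fun y => v (y + ω)) (deriv v (x + ω)) x := by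
      have h0 := (hvd (x + ω)).hasDerivAt
      simpa [Function.comp_def] using HasDerivAt.comp x h0 ((hasDerivAt_id x).add_const ω)
    have h2 : (fun y => v (y + ω)) = v := funext fun y => hvper y
    rw [h2] at h1
    exact h1.deriv.symm
  have hFper : Function.Periodic F ω := by
    intro x
    simp [hF, hvper x, hΦper x, hRper x, hdvper x]
  -- FTC over one period
  have hint : ∀ a b : ℝ, IntervalIntegrable (fun x => -(m * h x)) MeasureTheory.volume a b :=
    fun a b => ((continuous_const.mul hhc).neg).intervalIntegrable a b
  have hFTC : (∫ x in (0:ℝ)..ω, -(m * h x)) = F ω - F 0 :=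
    intervalIntegral.integral_eq_sub_of_hasDerivAt (fun x _ => hFdiff x) (hint 0 ω)
  have hF0 : F ω = F 0 := by simpa using hFper 0
  have hIzero : (∫ x in (0:ℝ)..ω, h x) = 0 := by
    have h1 : (∫ x in (0:ℝ)..ω, -(m * h x)) = 0 := by rw [hFTC, hF0, sub_self]
    have h2 : (∫ x in (0:ℝ)..ω, -(m * h x)) = -(m * ∫ x in (0:ℝ)..ω, h x) := by
      simp [intervalIntegral.integral_neg, intervalIntegral.integral_const_mul]
    rw [h2] at h1
    have := neg_eq_zero.mp h1
    rcases mul_eq_zero.mp this with h3 | h3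
    · exact absurd h3 hm
    · exact h3
  -- h is periodic, so its integral over any period interval is 0
  have hhper : Function.Periodic h ω := by
    intro x; simp [hh, hvper x, hdvper x]
  -- conclude
  intro x₀
  by_contra hne
  have hpos : 0 < h x₀ := by
    have := hμpos x₀
    have habs : 0 < |deriv v x₀| := abs_pos.mpr hne
    positivity
  set a := x₀ - ω / 2 with ha
  have hmem : x₀ ∈ Set.Icc a (a + ω) := by
    refine ⟨?_, ?_⟩ <;> simp only [ha] <;> linarith
  have hIa : (∫ x in a..(a + ω), h x) = 0 := by
    rw [hhper.intervalIntegral_add_eq a 0, zero_add]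
    exact hIzero
  have : 0 < ∫ x in a..(a + ω), h x := by
    apply intervalIntegral.integral_pos (by linarith)
    · exact hhc.continuousOn
    · exact fun x _ => hhnn x
    · exact ⟨x₀, hmem, hpos⟩
  linarith [hIa ▸ this]
end

section
/- Let Ψ : (0,∞) → ℝ be C² and ρ_g < ρ_ℓ positive reals such that Ψ''(ρ_g) > 0, Ψ''(ρ_ℓ) > 0, Ψ'(ρ_g) = Ψ'(ρ_ℓ), and Ψ(ρ_ℓ) - Ψ(ρ_g) = Ψ'(ρ_g)(ρ_ℓ - ρ_g) (bitangency), with Ψ(ρ) > Ψ(ρ_g) + Ψ'(ρ_g)(ρ - ρ_g) for ρ ∈ (ρ_g, ρ_ℓ). Then there exists m₀ > 0 such that for all m with |m| < m₀, the perturbed energy Ψ^m(ρ) = Ψ(ρ) - m²/(2ρ) admits points ρ_g^m, ρ_ℓ^m near ρ_g, ρ_ℓ with Ψ^{m}{}'(ρ_g^m) = Ψ^{m}{}'(ρ_ℓ^m) and Ψ^m(ρ_ℓ^m) - Ψ^m(ρ_g^m) = Ψ^{m}{}'(ρ_g^m)(ρ_ℓ^m - ρ_g^m). -/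
noncomputable def auxEquiv14 (a b c : ℝ) (ha : a ≠ 0) (hb : b ≠ 0) (hc : c ≠ 0) :
    (ℝ × ℝ × ℝ) ≃L[ℝ] (ℝ × ℝ × ℝ) :=
  LinearEquiv.toContinuousLinearEquiv
    { toFun := fun p => (p.1, a * p.2.1 - b * p.2.2, -(a * c) * p.2.1)
      invFun := fun q => (q.1, -q.2.2 / (a * c), (a * (-q.2.2 / (a * c)) - q.2.1) / b)
      map_add' := by intro p q; simp [Prod.ext_iff]; constructor <;> ring
      map_smul' := by intro r p; simp [Prod.ext_iff]; constructor <;> ring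
      left_inv := by
        intro p; simp only [Prod.ext_iff]
        refine ⟨trivial, ?_, ?_⟩ <;> field_simp <;> ring
      right_inv := by
        intro q; simp only [Prod.ext_iff]
        refine ⟨trivial, ?_, ?_⟩ <;> field_simp <;> ring }

@[simp] lemma auxEquiv14_apply (a b c : ℝ) (ha : a ≠ 0) (hb : b ≠ 0) (hc : c ≠ 0) (p : ℝ × ℝ × ℝ) :
    auxEquiv14 a b c ha hb hc p = (p.1, a * p.2.1 - b * p.2.2, -(a * c) * p.2.1) := rfl

lemma derivAux14 (Ψ : ℝ → ℝ) (m x : ℝ) (hx : x ≠ 0) (h : DifferentiableAt ℝ Ψ x) :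
    deriv (fun ρ => Ψ ρ - m ^ 2 / (2 * ρ)) x = deriv Ψ x + m * m * (2 * (x * x))⁻¹ := by
  have h2 : (2 : ℝ) * x ≠ 0 := mul_ne_zero two_ne_zero hx
  have hd : HasDerivAt (fun ρ : ℝ => m ^ 2 / (2 * ρ))
      ((0 * (2 * x) - m ^ 2 * (2 * 1)) / (2 * x) ^ 2) x :=
    (hasDerivAt_const x (m ^ 2)).div ((hasDerivAt_id x).const_mul 2) h2
  rw [show (fun ρ => Ψ ρ - m ^ 2 / (2 * ρ)) = (Ψ - fun ρ => m ^ 2 / (2 * ρ)) from rfl,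
    (h.hasDerivAt.sub hd).deriv]
  field_simp
  ring

theorem stmt_14 (Ψ : ℝ → ℝ) (hΨ : ContDiffOn ℝ 2 Ψ (Set.Ioi 0))
    (ρg ρl : ℝ) (hρg : 0 < ρg) (hgl : ρg < ρl)
    (hΨ''g : 0 < deriv (deriv Ψ) ρg) (hΨ''l : 0 < deriv (deriv Ψ) ρl)
    (htan' : deriv Ψ ρg = deriv Ψ ρl)
    (htan : Ψ ρl - Ψ ρg = deriv Ψ ρg * (ρl - ρg))
    (habove : ∀ ρ ∈ Set.Ioo ρg ρl, Ψ ρg + deriv Ψ ρg * (ρ - ρg) < Ψ ρ) :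
    ∀ δ > (0:ℝ), ∃ m₀ > (0:ℝ), ∀ m : ℝ, |m| < m₀ →
      ∃ ρgm ρlm : ℝ, |ρgm - ρg| < δ ∧ |ρlm - ρl| < δ ∧ 0 < ρgm ∧ 0 < ρlm ∧
        deriv (fun ρ => Ψ ρ - m ^ 2 / (2 * ρ)) ρgm =
          deriv (fun ρ => Ψ ρ - m ^ 2 / (2 * ρ)) ρlm ∧
        (Ψ ρlm - m ^ 2 / (2 * ρlm)) - (Ψ ρgm - m ^ 2 / (2 * ρgm)) =
          deriv (fun ρ => Ψ ρ - m ^ 2 / (2 * ρ)) ρgm * (ρlm - ρgm) := by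
  intro δ hδ
  have hρl : 0 < ρl := hρg.trans hgl
  set dΨ := deriv Ψ with hdΨ
  set a := deriv dΨ ρg with ha
  set b := deriv dΨ ρl with hb
  set c := ρl - ρg with hc
  have ha0 : a ≠ 0 := ne_of_gt hΨ''g
  have hb0 : b ≠ 0 := ne_of_gt hΨ''l
  have hc0 : c ≠ 0 := ne_of_gt (sub_pos.mpr hgl)
  -- differentiability facts
  have hΨg : ContDiffAt ℝ 2 Ψ ρg := hΨ.contDiffAt (Ioi_mem_nhds hρg)
  have hΨl : ContDiffAt ℝ 2 Ψ ρl := hΨ.contDiffAt (Ioi_mem_nhds hρl)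
  have hd1 : ContDiffOn ℝ 1 dΨ (Set.Ioi 0) :=
    hΨ.deriv_of_isOpen isOpen_Ioi (by norm_num)
  have hdg : ContDiffAt ℝ 1 dΨ ρg := hd1.contDiffAt (Ioi_mem_nhds hρg)
  have hdl : ContDiffAt ℝ 1 dΨ ρl := hd1.contDiffAt (Ioi_mem_nhds hρl)
  have hsΨg : HasStrictDerivAt Ψ (dΨ ρg) ρg := hΨg.hasStrictDerivAt (by norm_num)
  have hsΨl : HasStrictDerivAt Ψ (dΨ ρl) ρl := hΨl.hasStrictDerivAt (by norm_num)
  have hsdg : HasStrictDerivAt dΨ a ρg := hdg.hasStrictDerivAt one_ne_zero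
  have hsdl : HasStrictDerivAt dΨ b ρl := hdl.hasStrictDerivAt one_ne_zero
  -- the map F
  set F : ℝ × ℝ × ℝ → ℝ × ℝ × ℝ := fun p =>
    (p.1,
     dΨ p.2.1 + p.1 * p.1 * (2 * (p.2.1 * p.2.1))⁻¹ -
       (dΨ p.2.2 + p.1 * p.1 * (2 * (p.2.2 * p.2.2))⁻¹),
     (Ψ p.2.2 - p.1 * p.1 * (2 * p.2.2)⁻¹) - (Ψ p.2.1 - p.1 * p.1 * (2 * p.2.1)⁻¹) -
       (dΨ p.2.1 + p.1 * p.1 * (2 * (p.2.1 * p.2.1))⁻¹) * (p.2.2 - p.2.1)) with hF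
  set p₀ : ℝ × ℝ × ℝ := (0, ρg, ρl) with hp₀
  -- basic strict fderivs
  have hm : HasStrictFDerivAt (fun p : ℝ × ℝ × ℝ => p.1)
      (ContinuousLinearMap.fst ℝ ℝ (ℝ × ℝ)) p₀ := hasStrictFDerivAt_fst
  have hx : HasStrictFDerivAt (fun p : ℝ × ℝ × ℝ => p.2.1)
      ((ContinuousLinearMap.fst ℝ ℝ ℝ).comp (ContinuousLinearMap.snd ℝ ℝ (ℝ × ℝ))) p₀ :=
    hasStrictFDerivAt_fst.comp p₀ hasStrictFDerivAt_snd
  have hy : HasStrictFDerivAt (fun p : ℝ × ℝ × ℝ => p.2.2)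
      ((ContinuousLinearMap.snd ℝ ℝ ℝ).comp (ContinuousLinearMap.snd ℝ ℝ (ℝ × ℝ))) p₀ :=
    hasStrictFDerivAt_snd.comp p₀ hasStrictFDerivAt_snd
  have hmm := hm.mul hm
  -- inverse pieces
  have h2g : (2 : ℝ) * ρg ≠ 0 := by positivity
  have h2l : (2 : ℝ) * ρl ≠ 0 := by positivity
  have h2gg : (2 : ℝ) * (ρg * ρg) ≠ 0 := by positivity
  have h2ll : (2 : ℝ) * (ρl * ρl) ≠ 0 := by positivity
  have hinv1g := (hasStrictDerivAt_inv h2g).comp_hasStrictFDerivAt p₀ (hx.const_mul 2)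
  have hinv1l := (hasStrictDerivAt_inv h2l).comp_hasStrictFDerivAt p₀ (hy.const_mul 2)
  have hinv2g := (hasStrictDerivAt_inv h2gg).comp_hasStrictFDerivAt p₀
    ((hx.mul hx).const_mul 2)
  have hinv2l := (hasStrictDerivAt_inv h2ll).comp_hasStrictFDerivAt p₀
    ((hy.mul hy).const_mul 2)
  -- compositions with Ψ and dΨ
  have hΨx := hsΨg.comp_hasStrictFDerivAt p₀ hx
  have hΨy := hsΨl.comp_hasStrictFDerivAt p₀ hy
  have hdx := hsdg.comp_hasStrictFDerivAt p₀ hx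
  have hdy := hsdl.comp_hasStrictFDerivAt p₀ hy
  -- assemble F
  have hF2 := (hdx.add (hmm.mul hinv2g)).sub (hdy.add (hmm.mul hinv2l))
  have hF3 := ((hΨy.sub (hmm.mul hinv1l)).sub (hΨx.sub (hmm.mul hinv1g))).sub
    ((hdx.add (hmm.mul hinv2g)).mul (hy.sub hx))
  have hFD := HasStrictFDerivAt.prodMk hm (HasStrictFDerivAt.prodMk hF2 hF3)
  set A := auxEquiv14 a b c ha0 hb0 hc0 with hA
  have key : ∀ L : (ℝ × ℝ × ℝ) →L[ℝ] (ℝ × ℝ × ℝ), HasStrictFDerivAt F L p₀ →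
      L = (A : (ℝ × ℝ × ℝ) →L[ℝ] (ℝ × ℝ × ℝ)) →
      HasStrictFDerivAt F (A : (ℝ × ℝ × ℝ) →L[ℝ] (ℝ × ℝ × ℝ)) p₀ := fun L h e => e ▸ h
  have hAD : HasStrictFDerivAt F (A : (ℝ × ℝ × ℝ) →L[ℝ] (ℝ × ℝ × ℝ)) p₀ := by
    apply key _ hFD
    refine ContinuousLinearMap.ext fun v => ?_
    simp only [hp₀, ContinuousLinearMap.prod_apply, ContinuousLinearMap.add_apply,
      ContinuousLinearMap.sub_apply, ContinuousLinearMap.smul_apply,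
      ContinuousLinearMap.coe_comp', ContinuousLinearMap.coe_fst',
      ContinuousLinearMap.coe_snd', Function.comp_apply, smul_eq_mul,
      ContinuousLinearEquiv.coe_coe, auxEquiv14_apply, Prod.mk.injEq, hA,
      Pi.mul_apply, Pi.add_apply, Pi.sub_apply, Pi.pow_apply]
    exact ⟨trivial, by ring, by rw [hc, ← htan']; ring⟩
  have hmap := hAD.map_nhds_eq_of_equiv
  have hFp₀ : F p₀ = (0, 0, 0) := by
    simp only [hF, hp₀, Prod.mk.injEq]
    norm_num
    refine ⟨by rw [htan']; ring, ?_⟩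
    rw [htan, hc]
    ring
  set ε : ℝ := min δ ρg with hε
  have hε0 : 0 < ε := lt_min hδ hρg
  have hball : F '' Metric.ball p₀ ε ∈ nhds (F p₀) := by
    rw [← hmap, Filter.mem_map]
    exact Filter.mem_of_superset (Metric.ball_mem_nhds p₀ hε0)
      (Set.subset_preimage_image F _)
  rw [hFp₀] at hball
  obtain ⟨m₀, hm₀, hsub⟩ := Metric.mem_nhds_iff.mp hball
  refine ⟨m₀, hm₀, fun m hmlt => ?_⟩
  have hq : ((m, 0, 0) : ℝ × ℝ × ℝ) ∈ Metric.ball ((0:ℝ), (0:ℝ), (0:ℝ)) m₀ := by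
    rw [Metric.mem_ball, Prod.dist_eq, Prod.dist_eq]
    simpa [Real.dist_eq] using hmlt
  obtain ⟨p, hpball, hpF⟩ := hsub hq
  have hdball := Metric.mem_ball.mp hpball
  rw [hp₀, Prod.dist_eq] at hdball
  have hd2 : dist p.2 ((ρg, ρl) : ℝ × ℝ) < ε :=
    lt_of_le_of_lt (le_max_right _ _) hdball
  rw [Prod.dist_eq] at hd2
  have hxd : |p.2.1 - ρg| < ε := by
    have := lt_of_le_of_lt (le_max_left _ _) hd2
    rwa [Real.dist_eq] at this
  have hyd : |p.2.2 - ρl| < ε := by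
    have := lt_of_le_of_lt (le_max_right _ _) hd2
    rwa [Real.dist_eq] at this
  have hεδ : ε ≤ δ := min_le_left _ _
  have hερg : ε ≤ ρg := min_le_right _ _
  have hxabs := abs_lt.mp hxd
  have hyabs := abs_lt.mp hyd
  have hxpos : 0 < p.2.1 := by linarith
  have hypos : 0 < p.2.2 := by linarith
  simp only [hF, Prod.mk.injEq] at hpF
  obtain ⟨hp1, heq2, heq3⟩ := hpF
  refine ⟨p.2.1, p.2.2, lt_of_lt_of_le hxd hεδ, lt_of_lt_of_le hyd hεδ, hxpos, hypos, ?_, ?_⟩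
  · rw [derivAux14 Ψ m p.2.1 (ne_of_gt hxpos)
      ((hΨ.contDiffAt (Ioi_mem_nhds hxpos)).differentiableAt two_ne_zero),
      derivAux14 Ψ m p.2.2 (ne_of_gt hypos)
      ((hΨ.contDiffAt (Ioi_mem_nhds hypos)).differentiableAt two_ne_zero)]
    rw [← hp1]
    linarith [heq2]
  · rw [derivAux14 Ψ m p.2.1 (ne_of_gt hxpos)
      ((hΨ.contDiffAt (Ioi_mem_nhds hxpos)).differentiableAt two_ne_zero)]
    have e : ∀ t : ℝ, m ^ 2 / (2 * t) = m * m * (2 * t)⁻¹ := fun t => by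
      rw [div_eq_mul_inv, sq]
    rw [e, e, ← hp1]
    linarith [heq3]
end
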